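/- arXiv:2509.02004 — 5 statements merged into one kernel-verified Lean document; each statement's English description precedes it below -/
import Mathlib

section
/- Under the common-hash (CH) model, the CH estimator is unbiased: for every item i ∈ {1,…,d}, E[f̂_i] = f_i, where f̂_i = b/(nβ(b−1)) · (c̃_{H(i)} − nβ/b − μ). -/
/-!
The count `c̃_{H(i)}` splits into the sampled users whose item collides with `i` under `H`, plus
the dummy count of the bucket `H(i)`. A user with `x_j = i` always collides, any other collides
with probability `1/b` (pairwise independence and uniformity of `H`), and sampling is independent
of hashing, so the first part has mean `β (m + (n - m)/b)` with `m = n f_i`. The dummy counts are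
independent of `H(i)` and all have mean `μ`, so `z_{H(i)}` has mean `μ`. Solving for `m / n` gives
the estimator.
-/

open MeasureTheory ProbabilityTheory

namespace ProbabilityTheory

lemma mul_ite_comp_eq_indicator {Ω 𝓨 : Type*} {p : 𝓨 → Prop} [DecidablePred p] (X : Ω → ℝ)
    (Y : Ω → 𝓨) : (fun ω => X ω * if p (Y ω) then 1 else 0) = {ω | p (Y ω)}.indicator X := by
  ext ω
  simp [Set.indicator_apply]

variable {Ω 𝓨 : Type*} [MeasurableSpace Ω] [MeasurableSpace 𝓨] {P : Measure Ω}

lemma integrable_mul_ite {X : Ω → ℝ} {Y : Ω → 𝓨} {p : 𝓨 → Prop} [DecidablePred p]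
    (hX : Integrable X P) (hY : Measurable Y) (hp : MeasurableSet {y | p y}) :
    Integrable (fun ω => X ω * if p (Y ω) then 1 else 0) P := by
  rw [mul_ite_comp_eq_indicator]
  exact hX.indicator (hY hp)

lemma IndepFun.integral_mul_ite {X : Ω → ℝ} {Y : Ω → 𝓨}
    {p : 𝓨 → Prop} [DecidablePred p] (hXY : IndepFun X Y P) (hX : Integrable X P)
    (hY : Measurable Y) (hp : MeasurableSet {y | p y}) :
    ∫ ω, X ω * (if p (Y ω) then 1 else 0) ∂P = (∫ ω, X ω ∂P) * P.real {ω | p (Y ω)} := by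
  have hφ : Measurable fun y => if p y then (1 : ℝ) else 0 :=
    measurable_const.ite hp measurable_const
  have hind : IndepFun X (fun ω => if p (Y ω) then (1 : ℝ) else 0) P :=
    hXY.comp measurable_id hφ
  rw [hind.integral_fun_mul_eq_mul_integral hX.aestronglyMeasurable
    (hφ.comp hY).aestronglyMeasurable, ← integral_indicator_one (s := {ω | p (Y ω)}) (hY hp)]
  congr 2 with ω
  simp [Set.indicator_apply]

lemma measureReal_setOf_eq_of_indepFun {ι : Type*} [Fintype ι] [MeasurableSpace ι]
    [MeasurableSingletonClass ι] [IsProbabilityMeasure P] {X Y : Ω → ι}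
    (hXY : IndepFun X Y P) (hX : Measurable X) (hY : Measurable Y)
    (hunif : ∀ v, P (X ⁻¹' {v}) = (Fintype.card ι : ENNReal)⁻¹) :
    P.real {ω | X ω = Y ω} = (Fintype.card ι : ℝ)⁻¹ := by
  have hfib : {ω | X ω = Y ω} = ⋃ v ∈ (Finset.univ : Finset ι), X ⁻¹' {v} ∩ Y ⁻¹' {v} := by
    ext ω; simp [eq_comm]
  have hdisj : Set.PairwiseDisjoint (Finset.univ : Finset ι) fun v => X ⁻¹' {v} ∩ Y ⁻¹' {v} :=
    fun v _ w _ hvw => Set.disjoint_left.2 fun ω hv hw => hvw (hv.1.symm.trans hw.1)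
  rw [hfib, measureReal_biUnion_finset hdisj
    fun v _ => (hX (measurableSet_singleton v)).inter (hY (measurableSet_singleton v))]
  simp_rw [measureReal_def, hXY.measure_inter_preimage_eq_mul _ _ (measurableSet_singleton _)
    (measurableSet_singleton _), hunif, ENNReal.toReal_mul, ← measureReal_def, ENNReal.toReal_inv, ENNReal.toReal_natCast,
    ← Finset.mul_sum]
  rw [sum_measureReal_preimage_singleton _ fun v _ => hY (measurableSet_singleton v)]
  simp

lemma measureReal_setOf_eq_of_pairwise_indepFun {κ ι : Type*} [DecidableEq κ] [Fintype ι]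
    [MeasurableSpace ι] [MeasurableSingletonClass ι] [IsProbabilityMeasure P] {H : κ → Ω → ι}
    (hmeas : ∀ a, Measurable (H a)) (hpair : ∀ a a', a ≠ a' → IndepFun (H a) (H a') P)
    (hunif : ∀ a v, P (H a ⁻¹' {v}) = (Fintype.card ι : ENNReal)⁻¹) (a i : κ) :
    P.real {ω | H a ω = H i ω} = if a = i then 1 else (Fintype.card ι : ℝ)⁻¹ := by
  split_ifs with ha
  · simp [ha]
  · exact measureReal_setOf_eq_of_indepFun (hpair a i ha) (hmeas a) (hmeas i) (hunif a)

omit [MeasurableSpace Ω] in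
lemma apply_eq_sum_mul_ite {ι : Type*} [Fintype ι] [DecidableEq ι] (Z : ι → Ω → ℝ) (K : Ω → ι)
    (ω : Ω) : Z (K ω) ω = ∑ k, Z k ω * if K ω = k then 1 else 0 := by
  simp

variable {ι : Type*} [Fintype ι] [MeasurableSpace ι] [MeasurableSingletonClass ι]
  {Z : ι → Ω → ℝ} {K : Ω → ι}

lemma integrable_apply_index (hK : Measurable K) (hZ : ∀ k, Integrable (Z k) P) :
    Integrable (fun ω => Z (K ω) ω) P := by
  classical
  simp_rw [apply_eq_sum_mul_ite Z K]
  exact integrable_finsetSum _ fun k _ =>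
    integrable_mul_ite (p := (· = k)) (hZ k) hK (measurableSet_singleton k)

lemma integral_apply_index_of_indepFun [IsProbabilityMeasure P] {m : ℝ}
    (hZK : IndepFun (fun ω k => Z k ω) K P) (hK : Measurable K) (hZ : ∀ k, Integrable (Z k) P)
    (hmean : ∀ k, ∫ ω, Z k ω ∂P = m) :
    ∫ ω, Z (K ω) ω ∂P = m := by
  classical
  simp_rw [apply_eq_sum_mul_ite Z K]
  rw [integral_finsetSum _ fun k _ =>
    integrable_mul_ite (p := (· = k)) (hZ k) hK (measurableSet_singleton k)]
  have hterm : ∀ k, ∫ ω, Z k ω * (if K ω = k then 1 else 0) ∂P = m * P.real (K ⁻¹' {k}) :=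
    fun k => by
      have hind : IndepFun (Z k) K P := hZK.comp (measurable_pi_apply k) measurable_id
      rw [hind.integral_mul_ite (p := (· = k)) (hZ k) hK (measurableSet_singleton k), hmean]
      rfl
  simp_rw [hterm, ← Finset.mul_sum]
  rw [sum_measureReal_preimage_singleton _ fun k _ => hK (measurableSet_singleton k)]
  simp

end ProbabilityTheory

section CommonHash

variable {Ω : Type*} [MeasurableSpace Ω] {P : Measure Ω} {n d b : ℕ} {x : Fin n → Fin d}
  {H : Fin d → Ω → Fin b} {α : Fin n → Ω → ℝ}

lemma measurableSet_setOf_apply_eq_apply (a i : Fin d) :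
    MeasurableSet {h : Fin d → Fin b | h a = h i} :=
  measurableSet_eq_fun (measurable_pi_apply a) (measurable_pi_apply i)

lemma integrable_mul_collision (hHmeas : ∀ k, Measurable (H k)) (hα : ∀ j, Integrable (α j) P)
    (i : Fin d) (j : Fin n) :
    Integrable (fun ω => α j ω * if H (x j) ω = H i ω then 1 else 0) P :=
  integrable_mul_ite (p := fun h => h (x j) = h i) (hα j) (measurable_pi_lambda _ hHmeas)
    (measurableSet_setOf_apply_eq_apply _ _)

lemma integrable_sum_mul_collision (hHmeas : ∀ k, Measurable (H k))
    (hα : ∀ j, Integrable (α j) P) (i : Fin d) :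
    Integrable (fun ω => ∑ j, α j ω * if H (x j) ω = H i ω then 1 else 0) P :=
  integrable_finsetSum _ fun j _ => integrable_mul_collision hHmeas hα i j

lemma integral_sum_mul_collision [IsProbabilityMeasure P] {β : ℝ}
    (hHmeas : ∀ k, Measurable (H k)) (hHunif : ∀ k v, P (H k ⁻¹' {v}) = 1 / b)
    (hHpair : ∀ k k', k ≠ k' → IndepFun (H k) (H k') P) (hα : ∀ j, Integrable (α j) P)
    (hαmean : ∀ j, ∫ ω, α j ω ∂P = β)
    (hαH : IndepFun (fun ω (j : Fin n) => α j ω) (fun ω (k : Fin d) => H k ω) P) (i : Fin d) :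
    ∫ ω, (∑ j, α j ω * if H (x j) ω = H i ω then 1 else 0) ∂P
      = β * (n * (b : ℝ)⁻¹ + (1 - (b : ℝ)⁻¹) * (Finset.univ.filter fun j => x j = i).card) := by
  have hterm : ∀ j, ∫ ω, α j ω * (if H (x j) ω = H i ω then 1 else 0) ∂P
      = β * ((b : ℝ)⁻¹ + (1 - (b : ℝ)⁻¹) * if x j = i then 1 else 0) := by
    intro j
    have hind : IndepFun (α j) (fun ω k => H k ω) P :=
      hαH.comp (measurable_pi_apply j) measurable_id
    rw [hind.integral_mul_ite (p := fun h => h (x j) = h i) (hα j)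
      (measurable_pi_lambda _ hHmeas) (measurableSet_setOf_apply_eq_apply _ _), hαmean,
      measureReal_setOf_eq_of_pairwise_indepFun hHmeas hHpair (by simpa using hHunif)]
    simp only [Fintype.card_fin]
    split_ifs <;> ring
  rw [integral_finsetSum _ fun j _ => integrable_mul_collision hHmeas hα i j]
  simp_rw [hterm, ← Finset.mul_sum, Finset.sum_add_distrib, ← Finset.mul_sum, Finset.sum_boole]
  simp

end CommonHash

theorem ch_estimator_unbiased_general
    {Ω : Type*} [MeasurableSpace Ω] (P : Measure Ω) [IsProbabilityMeasure P]
    -- numbers of users, items, hash range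
    (n d b : ℕ) (hn : 1 ≤ n) (hb : 2 ≤ b)
    -- sampling probability, dummy-count mean and variance
    (β : ℝ) (hβ0 : 0 < β) (μ : ℝ)
    -- users' items
    (x : Fin n → Fin d)
    -- random hash values, sampling indicators, dummy counts
    (H : Fin d → Ω → Fin b) (α : Fin n → Ω → ℝ) (z : Fin b → Ω → ℝ)
    (hHmeas : ∀ k, Measurable (H k))
    -- hash values are pairwise independent with uniform marginals on {1,…,b}
    (hHunif : ∀ k v, P (H k ⁻¹' {v}) = 1 / b)
    (hHpair : ∀ k k', k ≠ k' → IndepFun (H k) (H k') P)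
    -- i.i.d. Bernoulli(β) sampling indicators, independent of the hash values
    (hαmean : ∀ j, ∫ ω, α j ω ∂P = β)
    (hαH : IndepFun (fun ω (j : Fin n) => α j ω) (fun ω (k : Fin d) => H k ω) P)
    -- i.i.d. nonnegative-integer-valued dummy counts with mean μ and variance σ²,
    -- independent of the hash values and the sampling indicators
    (hzint : ∀ k, Integrable (z k) P)
    (hzmean : ∀ k, ∫ ω, z k ω ∂P = μ)
    (hzrest : IndepFun (fun ω (k : Fin b) => z k ω)
      (fun ω => ((fun j : Fin n => α j ω), (fun k : Fin d => H k ω))) P)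
    -- counts: c̃_k = Σ_j α_j · 1{H(x_j) = k} + z_k
    (c : Fin b → Ω → ℝ)
    (hc : ∀ k ω, c k ω = (∑ j, α j ω * (if H (x j) ω = k then 1 else 0)) + z k ω)
    -- estimator: f̂_i = b/(nβ(b−1)) · (c̃_{H(i)} − nβ/b − μ)
    (fhat : Fin d → Ω → ℝ)
    (hfhat : ∀ i ω, fhat i ω =
      ((b : ℝ) / (n * β * ((b : ℝ) - 1))) * (c (H i ω) ω - n * β / b - μ))
    -- relative frequencies: f_i = (1/n)·#{j : x_j = i}
    (f : Fin d → ℝ)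
    (hf : ∀ i, f i = ((Finset.univ.filter fun j => x j = i).card : ℝ) / n)
    (i : Fin d) :
    ∫ ω, fhat i ω ∂P = f i := by
  have hb1 : (b : ℝ) - 1 ≠ 0 := sub_ne_zero.2 (by exact_mod_cast (by omega : b ≠ 1))
  have hn0 : (n : ℝ) ≠ 0 := by positivity
  -- a non-integrable `α j` would have integral `0 ≠ β`
  have hα : ∀ j, Integrable (α j) P := fun j =>
    .of_integral_ne_zero (by rw [hαmean]; exact hβ0.ne')
  have hzH : IndepFun (fun ω k => z k ω) (H i) P :=
    hzrest.comp measurable_id ((measurable_pi_apply i).comp measurable_snd)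
  have hcount_int : Integrable (fun ω => c (H i ω) ω) P := by
    simp_rw [hc]
    exact (integrable_sum_mul_collision hHmeas hα i).add
      (integrable_apply_index (hHmeas i) hzint)
  have hcount : ∫ ω, c (H i ω) ω ∂P = β * (n * (b : ℝ)⁻¹
      + (1 - (b : ℝ)⁻¹) * (Finset.univ.filter fun j => x j = i).card) + μ := by
    simp_rw [hc]
    rw [integral_add (integrable_sum_mul_collision hHmeas hα i)
      (integrable_apply_index (hHmeas i) hzint),
      integral_sum_mul_collision hHmeas hHunif hHpair hα hαmean hαH,
      integral_apply_index_of_indepFun hzH (hHmeas i) hzint hzmean]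
  simp_rw [hfhat, sub_sub]
  rw [integral_const_mul, integral_sub hcount_int (integrable_const _), integral_const, hcount, hf]
  simp only [probReal_univ, one_smul]
  field_simp
  ring

/-- Under the common-hash (CH) model, the CH estimator is unbiased:
for every item `i`, `E[f̂ i] = f i`, where
`f̂ i = b/(nβ(b−1)) · (c̃_{H(i)} − nβ/b − μ)`. -/
theorem ch_estimator_unbiased
    {Ω : Type*} [MeasurableSpace Ω] (P : Measure Ω) [IsProbabilityMeasure P]
    -- numbers of users, items, hash range
    (n d b : ℕ) (hn : 1 ≤ n) (hd : 1 ≤ d) (hb : 2 ≤ b)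
    -- sampling probability, dummy-count mean and variance
    (β : ℝ) (hβ0 : 0 < β) (hβ1 : β ≤ 1) (μ σ2 : ℝ)
    -- users' items
    (x : Fin n → Fin d)
    -- random hash values, sampling indicators, dummy counts
    (H : Fin d → Ω → Fin b) (α : Fin n → Ω → ℝ) (z : Fin b → Ω → ℝ)
    (hHmeas : ∀ k, Measurable (H k))
    (hαmeas : ∀ j, Measurable (α j))
    (hzmeas : ∀ k, Measurable (z k))
    -- hash values are pairwise independent with uniform marginals on {1,…,b}
    (hHunif : ∀ k v, P (H k ⁻¹' {v}) = 1 / b)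
    (hHpair : ∀ k k', k ≠ k' → IndepFun (H k) (H k') P)
    -- i.i.d. Bernoulli(β) sampling indicators, independent of the hash values
    (hα01 : ∀ j ω, α j ω = 0 ∨ α j ω = 1)
    (hαmean : ∀ j, ∫ ω, α j ω ∂P = β)
    (hαiid : iIndepFun α P)
    (hαident : ∀ j j', IdentDistrib (α j) (α j') P P)
    (hαH : IndepFun (fun ω (j : Fin n) => α j ω) (fun ω (k : Fin d) => H k ω) P)
    -- i.i.d. nonnegative-integer-valued dummy counts with mean μ and variance σ²,
    -- independent of the hash values and the sampling indicators
    (hzNat : ∀ k ω, ∃ m : ℕ, z k ω = m)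
    (hzint : ∀ k, Integrable (z k) P)
    (hzmean : ∀ k, ∫ ω, z k ω ∂P = μ)
    (hzL2 : ∀ k, MemLp (z k) 2 P)
    (hzvar : ∀ k, variance (z k) P = σ2)
    (hziid : iIndepFun z P)
    (hzident : ∀ k k', IdentDistrib (z k) (z k') P P)
    (hzrest : IndepFun (fun ω (k : Fin b) => z k ω)
      (fun ω => ((fun j : Fin n => α j ω), (fun k : Fin d => H k ω))) P)
    -- counts: c̃_k = Σ_j α_j · 1{H(x_j) = k} + z_k
    (c : Fin b → Ω → ℝ)
    (hc : ∀ k ω, c k ω = (∑ j, α j ω * (if H (x j) ω = k then 1 else 0)) + z k ω)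
    -- estimator: f̂_i = b/(nβ(b−1)) · (c̃_{H(i)} − nβ/b − μ)
    (fhat : Fin d → Ω → ℝ)
    (hfhat : ∀ i ω, fhat i ω =
      ((b : ℝ) / (n * β * ((b : ℝ) - 1))) * (c (H i ω) ω - n * β / b - μ))
    -- relative frequencies: f_i = (1/n)·#{j : x_j = i}
    (f : Fin d → ℝ)
    (hf : ∀ i, f i = ((Finset.univ.filter fun j => x j = i).card : ℝ) / n)
    (i : Fin d) :
    ∫ ω, fhat i ω ∂P = f i :=
  ch_estimator_unbiased_general P n d b hn hb β hβ0 μ x H α z hHmeas hHunif hHpair hαmean hαH hzint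
    hzmean hzrest c hc fhat hfhat f hf i
end

section
/- Under the common-hash (CH) model with 3-wise independent hash values, the CH estimator f̂_i = b/(nβ(b−1)) · (c̃_{H(i)} − nβ/b − μ) achieves, for every item i ∈ {1,…,d}, the expected squared error E[(f̂_i − f_i)²] = (b²/(n²β²(b−1)²)) · ( n·f_i·β(1−β) + σ² + ω ), where ω = Σ_{j∈{1,…,d}, j≠i} ( (n²f_j²β² + n f_j β(1−β))(b−1)/b² + n f_j β(1−β)/b² ). -/
/-!
The estimator is unbiased, so its mean squared error is `C² · Var c̃_{H(i)}` with
`C = b / (nβ(b-1))`. Grouping the sampled users by item,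
`c̃_{H(i)} = ∑ⱼ Aⱼ Iⱼ + z_{H(i)}`, where `Aⱼ` counts the sampled users holding `j` and
`Iⱼ = 1{H(j) = H(i)}`. The `Aⱼ` are uncorrelated (disjoint sets of users), the `Iⱼ` are
pairwise uncorrelated by 3-wise independence (`Iᵢ = 1`), and the two families are independent;
hence the products `Aⱼ Iⱼ` are pairwise uncorrelated, and
`Var (Aⱼ Iⱼ) = E[Aⱼ²] Var Iⱼ + Var Aⱼ (E Iⱼ)²` is, for `j ≠ i`, the `j`-th summand of `ω`.
Since `z` is independent of `(α, H)` and all `z_k` share mean `μ` and variance `σ²`, the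
dummy count `z_{H(i)}` has variance `σ²` and is uncorrelated with the collision count.
-/

open MeasureTheory ProbabilityTheory Finset
open scoped ENNReal

section

variable {Ω : Type*} {mΩ : MeasurableSpace Ω} {P : Measure Ω}

lemma covariance_sum_sum_of_pairwise [IsFiniteMeasure P] {ι : Type*} [DecidableEq ι]
    {X : ι → Ω → ℝ} (hX : ∀ u, MemLp (X u) 2 P)
    (hcov : Pairwise fun u u' => cov[X u, X u'; P] = 0) (s t : Finset ι) :
    cov[∑ u ∈ s, X u, ∑ u ∈ t, X u; P] = ∑ u ∈ s ∩ t, Var[X u; P] := by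
  have hdiag : ∀ u u', cov[X u, X u'; P] = if u = u' then Var[X u; P] else 0 := by
    intro u u'
    split_ifs with h
    · rw [h, covariance_self (hX u').aemeasurable]
    · exact hcov h
  simp_rw [covariance_sum_sum' (fun u _ => hX u) (fun u _ => hX u), hdiag, sum_ite_eq,
    ← sum_filter, filter_mem_eq_inter]

lemma covariance_mul_mul_of_indepFun [IsProbabilityMeasure P] {X X' Y Y' : Ω → ℝ}
    (hX : MemLp X ⊤ P) (hX' : MemLp X' ⊤ P) (hY : MemLp Y ⊤ P) (hY' : MemLp Y' ⊤ P)
    (hind : IndepFun (fun ω => (X ω, X' ω)) (fun ω => (Y ω, Y' ω)) P) :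
    cov[X * Y, X' * Y'; P] = P[X * X'] * cov[Y, Y'; P] + cov[X, X'; P] * P[Y] * P[Y'] := by
  have h2 : ∀ {V : Ω → ℝ}, MemLp V ⊤ P → MemLp V 2 P := fun h => h.mono_exponent le_top
  have hprod : ∀ g : ℝ × ℝ → ℝ, Measurable g →
      ∫ ω, g (X ω, X' ω) * g (Y ω, Y' ω) ∂P
        = (∫ ω, g (X ω, X' ω) ∂P) * ∫ ω, g (Y ω, Y' ω) ∂P := fun g hg =>
    hind.integral_fun_comp_mul_comp (hX.aemeasurable.prodMk hX'.aemeasurable)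
      (hY.aemeasurable.prodMk hY'.aemeasurable) hg.aestronglyMeasurable hg.aestronglyMeasurable
  have hmul := hprod (fun p => p.1 * p.2) (by fun_prop)
  have hfst := hprod Prod.fst measurable_fst
  have hsnd := hprod Prod.snd measurable_snd
  rw [covariance_eq_sub (h2 (hY.mul hX)) (h2 (hY'.mul hX')), covariance_eq_sub (h2 hY) (h2 hY'),
    covariance_eq_sub (h2 hX) (h2 hX')]
  simp only [Pi.mul_apply] at hmul hfst hsnd ⊢
  rw [hfst, hsnd, show (fun ω => X ω * Y ω * (X' ω * Y' ω))
    = fun ω => X ω * X' ω * (Y ω * Y' ω) by funext ω; ring, hmul]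
  ring

lemma memLp_top_of_zero_or_one {X : Ω → ℝ} (hXm : AEStronglyMeasurable X P)
    (hX : ∀ ω, X ω = 0 ∨ X ω = 1) : MemLp X ⊤ P :=
  memLp_top_of_bound hXm 1 (Filter.Eventually.of_forall fun ω => by
    rcases hX ω with h | h <;> simp [h])

lemma variance_of_zero_or_one [IsProbabilityMeasure P] {X : Ω → ℝ}
    (hXm : AEStronglyMeasurable X P) (hX : ∀ ω, X ω = 0 ∨ X ω = 1) :
    Var[X; P] = P[X] * (1 - P[X]) := by
  have hsq : X ^ 2 = X := funext fun ω => by rcases hX ω with h | h <;> simp [h]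
  rw [variance_eq_sub ((memLp_top_of_zero_or_one hXm hX).mono_exponent le_top), hsq]
  ring

lemma integral_sq_const_mul_sub_sub [IsProbabilityMeasure P] {Y : Ω → ℝ} (hY : MemLp Y 2 P)
    {C a t : ℝ} (ht : C * (P[Y] - a) = t) :
    ∫ ω, (C * (Y ω - a) - t) ^ 2 ∂P = C ^ 2 * Var[Y; P] := by
  rw [variance_eq_integral hY.aemeasurable, ← integral_const_mul, ← ht]
  congr 1 with ω
  ring

lemma measureReal_eq_sum_inter_preimage [IsFiniteMeasure P] {β : Type*} [Fintype β]
    [MeasurableSpace β] [MeasurableSingletonClass β] {K : Ω → β} (hK : Measurable K)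
    (s : Set Ω) : P.real s = ∑ v, P.real (s ∩ K ⁻¹' {v}) := by
  have := sum_measureReal_preimage_singleton (μ := P.restrict s) univ
    (fun v _ => hK (measurableSet_singleton v))
  simpa [measureReal_restrict_apply (hK (measurableSet_singleton _)), Set.inter_comm]
    using this.symm

section RandomIndex

variable {ι : Type*} [Fintype ι] [MeasurableSpace ι] [MeasurableSingletonClass ι]
  {ζ : ι → Ω → ℝ} {K : Ω → ι} {c : ℝ}

lemma memLp_apply_of_measurable {p : ℝ≥0∞} (hK : Measurable K) (hζ : ∀ k, MemLp (ζ k) p P) :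
    MemLp (fun ω => ζ (K ω) ω) p P := by
  classical
  have hsplit : (fun ω => ζ (K ω) ω) = ∑ k, (K ⁻¹' {k}).indicator (ζ k) := by
    funext ω; simp [Finset.sum_apply, Set.indicator_apply]
  rw [hsplit]
  exact memLp_finsetSum' _ fun k _ => (hζ k).indicator (hK (measurableSet_singleton k))

lemma integral_mul_apply_of_indepFun {Y : Ω → ℝ}
    (hind : IndepFun (fun ω k => ζ k ω) (fun ω => (Y ω, K ω)) P) (hY : Integrable Y P)
    (hK : Measurable K) (hζ : ∀ k, Integrable (ζ k) P) (hmean : ∀ k, P[ζ k] = c) :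
    ∫ ω, Y ω * ζ (K ω) ω ∂P = c * P[Y] := by
  classical
  set Y' : ι → Ω → ℝ := fun k => (K ⁻¹' {k}).indicator Y
  have hY' : ∀ k, Integrable (Y' k) P := fun k => hY.indicator (hK (measurableSet_singleton k))
  have hindep : ∀ k, IndepFun (Y' k) (ζ k) P := fun k =>
    (hind.comp (measurable_pi_apply k)
      (measurable_fst.indicator (measurable_snd (measurableSet_singleton k)) :
        Measurable ({p : ℝ × ι | p.2 = k}.indicator Prod.fst))).symm
  have hsplit : ∀ ω, Y ω * ζ (K ω) ω = ∑ k, Y' k ω * ζ k ω := fun ω => by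
    simp [Y', Set.indicator_apply]
  have hYsum : ∀ ω, ∑ k, Y' k ω = Y ω := fun ω => by
    simp [Y', Set.indicator_apply]
  simp_rw [hsplit]
  rw [integral_finsetSum (f := fun k ω => Y' k ω * ζ k ω) _
    fun k _ => (hindep k).integrable_mul (hY' k) (hζ k)]
  simp_rw [(hindep _).integral_fun_mul_eq_mul_integral (hY' _).aestronglyMeasurable
    (hζ _).aestronglyMeasurable, hmean, ← sum_mul, ← integral_finsetSum _ fun k _ => hY' k,
    hYsum, mul_comm]

variable [IsProbabilityMeasure P]

lemma integral_apply_of_indepFun (hind : IndepFun (fun ω k => ζ k ω) K P) (hK : Measurable K)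
    (hζ : ∀ k, Integrable (ζ k) P) (hmean : ∀ k, P[ζ k] = c) :
    ∫ ω, ζ (K ω) ω ∂P = c := by
  simpa using integral_mul_apply_of_indepFun (Y := fun _ => 1)
    (hind.comp measurable_id (measurable_const.prodMk measurable_id)) (integrable_const 1) hK hζ
    hmean

lemma covariance_apply_of_indepFun {Y : Ω → ℝ}
    (hind : IndepFun (fun ω k => ζ k ω) (fun ω => (Y ω, K ω)) P) (hY : MemLp Y 2 P)
    (hK : Measurable K) (hζ : ∀ k, MemLp (ζ k) 2 P) (hmean : ∀ k, P[ζ k] = c) :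
    cov[Y, fun ω => ζ (K ω) ω; P] = 0 := by
  have hζ1 : ∀ k, Integrable (ζ k) P := fun k => (hζ k).integrable one_le_two
  have hindK : IndepFun (fun ω k => ζ k ω) K P := hind.comp measurable_id measurable_snd
  rw [covariance_eq_sub hY (memLp_apply_of_measurable hK hζ)]
  change ∫ ω, Y ω * ζ (K ω) ω ∂P - _ = 0
  rw [integral_mul_apply_of_indepFun hind (hY.integrable one_le_two) hK hζ1 hmean,
    integral_apply_of_indepFun hindK hK hζ1 hmean]
  ring

lemma variance_apply_of_indepFun {v : ℝ} (hind : IndepFun (fun ω k => ζ k ω) K P)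
    (hK : Measurable K) (hζ : ∀ k, MemLp (ζ k) 2 P) (hmean : ∀ k, P[ζ k] = c)
    (hvar : ∀ k, Var[ζ k; P] = v) :
    Var[fun ω => ζ (K ω) ω; P] = v := by
  have hsq : ∀ k, P[fun ω => ζ k ω ^ 2] = v + c ^ 2 := fun k => by
    rw [← hvar k, variance_eq_sub (hζ k), hmean]; simp
  have hind2 : IndepFun (fun ω k => ζ k ω ^ 2) K P :=
    hind.comp (measurable_pi_lambda _ fun k => (measurable_pi_apply k).pow_const 2) measurable_id
  rw [variance_eq_sub (memLp_apply_of_measurable hK hζ),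
    integral_apply_of_indepFun hind hK (fun k => (hζ k).integrable one_le_two) hmean]
  simp only [Pi.pow_apply]
  rw [integral_apply_of_indepFun (ζ := fun k ω => ζ k ω ^ 2) hind2 hK
    (fun k => (hζ k).integrable_sq) hsq]
  ring

end RandomIndex

section Sampling

variable {κ : Type*} {α : κ → Ω → ℝ} {β : ℝ}

structure IsBernoulliFamily (α : κ → Ω → ℝ) (β : ℝ) (P : Measure Ω) : Prop where
  measurable : ∀ u, Measurable (α u)
  zero_or_one : ∀ u ω, α u ω = 0 ∨ α u ω = 1
  integral_eq : ∀ u, P[α u] = β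

lemma IsBernoulliFamily.memLp_top (hα : IsBernoulliFamily α β P) (u : κ) : MemLp (α u) ⊤ P :=
  memLp_top_of_zero_or_one (hα.measurable u).aestronglyMeasurable (hα.zero_or_one u)

lemma IsBernoulliFamily.variance_eq [IsProbabilityMeasure P] (hα : IsBernoulliFamily α β P)
    (u : κ) : Var[α u; P] = β * (1 - β) := by
  rw [variance_of_zero_or_one (hα.measurable u).aestronglyMeasurable (hα.zero_or_one u),
    hα.integral_eq]

variable {ι : Type*} [Fintype κ] [DecidableEq ι]

def sampledCount (α : κ → Ω → ℝ) (x : κ → ι) (j : ι) (ω : Ω) : ℝ :=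
  ∑ u with x u = j, α u ω

lemma measurable_sampledCount (hαm : ∀ u, Measurable (α u)) (x : κ → ι) (j : ι) :
    Measurable (sampledCount α x j) :=
  Finset.measurable_fun_sum _ fun u _ => hαm u

lemma memLp_top_sampledCount (hα : IsBernoulliFamily α β P) (x : κ → ι) (j : ι) :
    MemLp (sampledCount α x j) ⊤ P :=
  memLp_finsetSum _ fun u _ => hα.memLp_top u

variable [IsProbabilityMeasure P]

lemma integral_sampledCount (hα : IsBernoulliFamily α β P) (x : κ → ι) (j : ι) :
    P[sampledCount α x j] = #{u | x u = j} * β := by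
  unfold sampledCount
  rw [integral_finsetSum _ fun u _ => (hα.memLp_top u).integrable le_top]
  simp [hα.integral_eq]

lemma covariance_sampledCount (hα : IsBernoulliFamily α β P) (hind : iIndepFun α P)
    (x : κ → ι) (j j' : ι) :
    cov[sampledCount α x j, sampledCount α x j'; P]
      = if j = j' then #{u | x u = j} * (β * (1 - β)) else 0 := by
  classical
  have hL : ∀ u, MemLp (α u) 2 P := fun u => (hα.memLp_top u).mono_exponent le_top
  have hsum : ∀ j, sampledCount α x j = ∑ u with x u = j, α u := fun j =>
    funext fun ω => (Finset.sum_apply ω _ α).symm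
  rw [hsum, hsum, covariance_sum_sum_of_pairwise hL
    (fun u u' h => (hind.indepFun h).covariance_eq_zero (hL u) (hL u'))]
  simp_rw [hα.variance_eq]
  split_ifs with hjj'
  · simp [hjj']
  · refine sum_eq_zero fun u hu => absurd ?_ hjj'
    simp only [mem_inter, mem_filter, mem_univ, true_and] at hu
    exact hu.1.symm.trans hu.2

lemma variance_sampledCount (hα : IsBernoulliFamily α β P) (hind : iIndepFun α P) (x : κ → ι)
    (j : ι) : Var[sampledCount α x j; P] = #{u | x u = j} * (β * (1 - β)) := by
  rw [← covariance_self (memLp_top_sampledCount hα x j).aemeasurable,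
    covariance_sampledCount hα hind, if_pos rfl]

end Sampling

section Hash

variable {ι : Type*} {b : ℕ}

def UniformMarginals (P : Measure Ω) (H : ι → Ω → Fin b) : Prop :=
  ∀ k v, P (H k ⁻¹' {v}) = 1 / b

def IndepPairs (P : Measure Ω) (H : ι → Ω → Fin b) : Prop :=
  ∀ k1 k2 : ι, k1 ≠ k2 → ∀ v1 v2 : Fin b,
    P (H k1 ⁻¹' {v1} ∩ H k2 ⁻¹' {v2}) = P (H k1 ⁻¹' {v1}) * P (H k2 ⁻¹' {v2})

def IndepTriples (P : Measure Ω) (H : ι → Ω → Fin b) : Prop :=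
  ∀ k1 k2 k3 : ι, k1 ≠ k2 → k1 ≠ k3 → k2 ≠ k3 → ∀ v1 v2 v3 : Fin b,
    P (H k1 ⁻¹' {v1} ∩ H k2 ⁻¹' {v2} ∩ H k3 ⁻¹' {v3})
      = P (H k1 ⁻¹' {v1}) * P (H k2 ⁻¹' {v2}) * P (H k3 ⁻¹' {v3})

noncomputable def collisionIndicator (H : ι → Ω → Fin b) (i j : ι) : Ω → ℝ :=
  {ω | H j ω = H i ω}.indicator 1

variable {H : ι → Ω → Fin b}

@[simp]
lemma collisionIndicator_self (i : ι) : collisionIndicator H i i = 1 := by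
  simp [collisionIndicator]

lemma collisionIndicator_eq_zero_or_one (i j : ι) (ω : Ω) :
    collisionIndicator H i j ω = 0 ∨ collisionIndicator H i j ω = 1 := by
  unfold collisionIndicator
  by_cases h : H j ω = H i ω <;> simp [h]

lemma measurable_collisionIndicator (hH : ∀ k, Measurable (H k)) (i j : ι) :
    Measurable (collisionIndicator H i j) :=
  measurable_const.indicator (measurableSet_eq_fun (hH j) (hH i))

lemma memLp_top_collisionIndicator (hH : ∀ k, Measurable (H k)) (i j : ι) :
    MemLp (collisionIndicator H i j) ⊤ P :=
  memLp_top_of_zero_or_one (measurable_collisionIndicator hH i j).aestronglyMeasurable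
    (collisionIndicator_eq_zero_or_one i j)

variable [IsProbabilityMeasure P]

lemma natCast_ne_zero_of_fin_valued (P : Measure Ω) [IsProbabilityMeasure P] (K : Ω → Fin b) :
    (b : ℝ) ≠ 0 :=
  Nat.cast_ne_zero.mpr (K (nonempty_of_isProbabilityMeasure P).some).pos.ne'

lemma integral_collisionIndicator (hH : ∀ k, Measurable (H k)) (hunif : UniformMarginals P H)
    (hH2 : IndepPairs P H) {i j : ι} (hji : j ≠ i) :
    P[collisionIndicator H i j] = 1 / (b : ℝ) := by
  have hb := natCast_ne_zero_of_fin_valued P (H i)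
  have hfiber : ∀ v, {ω | H j ω = H i ω} ∩ H i ⁻¹' {v} = H j ⁻¹' {v} ∩ H i ⁻¹' {v} := by
    intro v; ext ω; simp +contextual [and_comm]
  rw [collisionIndicator, integral_indicator_one (measurableSet_eq_fun (hH j) (hH i)),
    measureReal_eq_sum_inter_preimage (hH i)]
  simp only [hfiber, measureReal_def, hH2 j i hji, hunif _ _, one_div, ENNReal.toReal_mul,
    ENNReal.toReal_inv, ENNReal.toReal_natCast, sum_const, card_univ, Fintype.card_fin,
    nsmul_eq_mul]
  field_simp

lemma integral_collisionIndicator_mul (hH : ∀ k, Measurable (H k))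
    (hunif : UniformMarginals P H) (hH3 : IndepTriples P H) {i j j' : ι} (hji : j ≠ i)
    (hj'i : j' ≠ i) (hjj' : j ≠ j') :
    P[collisionIndicator H i j * collisionIndicator H i j'] = 1 / (b : ℝ) ^ 2 := by
  have hb := natCast_ne_zero_of_fin_valued P (H i)
  have hfiber : ∀ v, ({ω | H j ω = H i ω} ∩ {ω | H j' ω = H i ω}) ∩ H i ⁻¹' {v}
      = H j ⁻¹' {v} ∩ H j' ⁻¹' {v} ∩ H i ⁻¹' {v} := by
    intro v; ext ω; simp +contextual [and_comm]
  rw [collisionIndicator, collisionIndicator, ← Set.inter_indicator_one,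
    integral_indicator_one ((measurableSet_eq_fun (hH j) (hH i)).inter
      (measurableSet_eq_fun (hH j') (hH i))),
    measureReal_eq_sum_inter_preimage (hH i)]
  simp only [hfiber, measureReal_def, hH3 j j' i hjj' hji hj'i, hunif _ _, one_div,
    ENNReal.toReal_mul, ENNReal.toReal_inv, ENNReal.toReal_natCast, sum_const, card_univ,
    Fintype.card_fin, nsmul_eq_mul]
  field_simp

lemma variance_collisionIndicator (hH : ∀ k, Measurable (H k)) (hunif : UniformMarginals P H)
    (hH2 : IndepPairs P H) {i j : ι} (hji : j ≠ i) :
    Var[collisionIndicator H i j; P] = ((b : ℝ) - 1) / b ^ 2 := by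
  have hb := natCast_ne_zero_of_fin_valued P (H i)
  rw [variance_of_zero_or_one (measurable_collisionIndicator hH i j).aestronglyMeasurable
    (collisionIndicator_eq_zero_or_one i j), integral_collisionIndicator hH hunif hH2 hji]
  field_simp

lemma covariance_collisionIndicator (hH : ∀ k, Measurable (H k)) (hunif : UniformMarginals P H)
    (hH2 : IndepPairs P H) (hH3 : IndepTriples P H) (i : ι) :
    Pairwise fun j j' => cov[collisionIndicator H i j, collisionIndicator H i j'; P] = 0 := by
  intro j j' hjj'
  by_cases hji : j = i
  · rw [hji, collisionIndicator_self]; exact covariance_const_left (μ := P) 1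
  by_cases hj'i : j' = i
  · rw [hj'i, collisionIndicator_self]; exact covariance_const_right (μ := P) 1
  have hL : ∀ k, MemLp (collisionIndicator H i k) 2 P := fun k =>
    (memLp_top_collisionIndicator hH i k).mono_exponent le_top
  rw [covariance_eq_sub (hL j) (hL j'),
    integral_collisionIndicator_mul hH hunif hH3 hji hj'i hjj',
    integral_collisionIndicator hH hunif hH2 hji, integral_collisionIndicator hH hunif hH2 hj'i]
  ring

end Hash

section CollisionCount

variable {κ ι : Type*} [Fintype κ] [DecidableEq ι] {b : ℕ}
  {α : κ → Ω → ℝ} {x : κ → ι} {H : ι → Ω → Fin b} {β : ℝ}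

/- `sampledCount` and `collisionIndicator` are defined pointwise from the families `α` and
`H`, so they are definitionally the same constructions on the coordinate families of `κ → ℝ`
and `ι → Fin b`, composed with the vectors `(α u ω)ᵤ` and `(H k ω)ₖ`. -/
lemma indepFun_sampledCount_collisionIndicator
    (hαH : IndepFun (fun ω u => α u ω) (fun ω k => H k ω) P) (i j j' : ι) :
    IndepFun (fun ω => (sampledCount α x j ω, sampledCount α x j' ω))
      (fun ω => (collisionIndicator H i j ω, collisionIndicator H i j' ω)) P :=
  hαH.comp
    ((measurable_sampledCount (fun u => measurable_pi_apply u) x j).prodMk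
      (measurable_sampledCount (fun u => measurable_pi_apply u) x j'))
    ((measurable_collisionIndicator (fun k => measurable_pi_apply k) i j).prodMk
      (measurable_collisionIndicator (fun k => measurable_pi_apply k) i j'))

lemma covariance_sampledCount_mul_collisionIndicator [IsProbabilityMeasure P]
    (hα : IsBernoulliFamily α β P) (hαind : iIndepFun α P) (hH : ∀ k, Measurable (H k))
    (hunif : UniformMarginals P H) (hH2 : IndepPairs P H) (hH3 : IndepTriples P H)
    (hαH : IndepFun (fun ω u => α u ω) (fun ω k => H k ω) P) (i : ι) :
    Pairwise fun j j' => cov[sampledCount α x j * collisionIndicator H i j,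
      sampledCount α x j' * collisionIndicator H i j'; P] = 0 := by
  intro j j' hjj'
  rw [covariance_mul_mul_of_indepFun (memLp_top_sampledCount hα x j)
      (memLp_top_sampledCount hα x j') (memLp_top_collisionIndicator hH i j)
      (memLp_top_collisionIndicator hH i j') (indepFun_sampledCount_collisionIndicator hαH i j j'),
    covariance_collisionIndicator hH hunif hH2 hH3 i hjj', covariance_sampledCount hα hαind,
    if_neg hjj']
  ring

lemma variance_sampledCount_mul_collisionIndicator [IsProbabilityMeasure P]
    (hα : IsBernoulliFamily α β P) (hαind : iIndepFun α P) (hH : ∀ k, Measurable (H k))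
    (hunif : UniformMarginals P H) (hH2 : IndepPairs P H)
    (hαH : IndepFun (fun ω u => α u ω) (fun ω k => H k ω) P) {i j : ι} (hji : j ≠ i) :
    Var[sampledCount α x j * collisionIndicator H i j; P]
      = ((#{u | x u = j} : ℝ) ^ 2 * β ^ 2 + #{u | x u = j} * β * (1 - β)) * ((b : ℝ) - 1)
        / b ^ 2 + #{u | x u = j} * β * (1 - β) / b ^ 2 := by
  have hA := memLp_top_sampledCount hα x j
  have hI : MemLp (collisionIndicator H i j) ⊤ P := memLp_top_collisionIndicator hH i j
  have hA2 : MemLp (sampledCount α x j) 2 P := hA.mono_exponent le_top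
  have hsq : P[sampledCount α x j * sampledCount α x j]
      = Var[sampledCount α x j; P] + P[sampledCount α x j] ^ 2 := by
    rw [← covariance_self hA.aemeasurable, covariance_eq_sub hA2 hA2]
    ring
  rw [← covariance_self ((hI.mul hA).mono_exponent (p := 2) le_top).aemeasurable,
    covariance_mul_mul_of_indepFun hA hA hI hI
      (indepFun_sampledCount_collisionIndicator hαH i j j),
    covariance_self hA.aemeasurable, covariance_self hI.aemeasurable, hsq,
    variance_sampledCount hα hαind, integral_sampledCount hα,
    variance_collisionIndicator hH hunif hH2 hji, integral_collisionIndicator hH hunif hH2 hji]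
  ring

variable [Fintype ι]

noncomputable def collisionCount (α : κ → Ω → ℝ) (x : κ → ι) (H : ι → Ω → Fin b) (i : ι)
    (ω : Ω) : ℝ :=
  ∑ j, sampledCount α x j ω * collisionIndicator H i j ω

lemma sum_mul_ite_eq_collisionCount (i : ι) (ω : Ω) :
    ∑ u, α u ω * (if H (x u) ω = H i ω then 1 else 0) = collisionCount α x H i ω := by
  rw [← sum_fiberwise univ x]
  refine sum_congr rfl fun j _ => ?_
  simp only [sampledCount, sum_mul]
  refine sum_congr rfl fun u hu => ?_
  rw [(mem_filter.mp hu).2]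
  simp [collisionIndicator, Set.indicator_apply]

lemma measurable_collisionCount (hαm : ∀ u, Measurable (α u)) (hH : ∀ k, Measurable (H k))
    (i : ι) : Measurable (collisionCount α x H i) :=
  Finset.measurable_fun_sum _ fun j _ =>
    (measurable_sampledCount hαm x j).mul (measurable_collisionIndicator hH i j)

lemma memLp_top_collisionCount (hα : IsBernoulliFamily α β P) (hH : ∀ k, Measurable (H k))
    (i : ι) : MemLp (collisionCount α x H i) ⊤ P :=
  memLp_finsetSum _ fun j _ =>
    (memLp_top_collisionIndicator hH i j).mul' (memLp_top_sampledCount hα x j)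

lemma ProbabilityTheory.IndepFun.prodMk_collisionCount {𝒵 : Type*} [MeasurableSpace 𝒵]
    {ξ : Ω → 𝒵} (hξ : IndepFun ξ (fun ω => ((fun u => α u ω), (fun k => H k ω))) P) (i : ι) :
    IndepFun ξ (fun ω => (collisionCount α x H i ω, H i ω)) P := by
  have hψ : Measurable fun p : (κ → ℝ) × (ι → Fin b) =>
      (collisionCount (fun u p => p.1 u) x (fun k p => p.2 k) i p, p.2 i) :=
    (measurable_collisionCount (fun u => (measurable_pi_apply u).comp measurable_fst)
      (fun k => (measurable_pi_apply k).comp measurable_snd) i).prodMk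
      ((measurable_pi_apply i).comp measurable_snd)
  exact hξ.comp measurable_id hψ

variable [IsProbabilityMeasure P]

lemma integral_collisionCount (hα : IsBernoulliFamily α β P) (hH : ∀ k, Measurable (H k))
    (hunif : UniformMarginals P H) (hH2 : IndepPairs P H)
    (hαH : IndepFun (fun ω u => α u ω) (fun ω k => H k ω) P) (i : ι) :
    P[collisionCount α x H i]
      = β * (#{u | x u = i} + ((Fintype.card κ : ℝ) - #{u | x u = i}) / b) := by
  have hterm : ∀ j, ∫ ω, sampledCount α x j ω * collisionIndicator H i j ω ∂P
      = #{u | x u = j} * β * P[collisionIndicator H i j] := fun j => by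
    rw [← integral_sampledCount hα]
    exact ((indepFun_sampledCount_collisionIndicator hαH i j j).comp measurable_fst
      measurable_fst).integral_fun_mul_eq_mul_integral
      (memLp_top_sampledCount hα x j).aestronglyMeasurable
      (measurable_collisionIndicator hH i j).aestronglyMeasurable
  have hcard :
      ∑ j ∈ univ.erase i, (#{u | x u = j} : ℝ) = Fintype.card κ - #{u | x u = i} := by
    rw [eq_sub_iff_add_eq, add_comm, add_sum_erase univ (fun j => (#{u | x u = j} : ℝ))
      (mem_univ i)]
    exact_mod_cast (card_eq_sum_card_fiberwise fun u _ => mem_univ (x u)).symm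
  unfold collisionCount
  rw [integral_finsetSum _ fun j _ =>
      ((memLp_top_collisionIndicator hH i j).mul' (memLp_top_sampledCount hα x j)).integrable
        le_top,
    ← add_sum_erase _ _ (mem_univ i), sum_congr rfl fun j hj => by
      rw [hterm, integral_collisionIndicator hH hunif hH2 (ne_of_mem_erase hj)], hterm,
    collisionIndicator_self, Pi.one_def, integral_const]
  simp only [← sum_mul, hcard, probReal_univ, smul_eq_mul]
  ring

lemma variance_collisionCount (hα : IsBernoulliFamily α β P) (hαind : iIndepFun α P)
    (hH : ∀ k, Measurable (H k)) (hunif : UniformMarginals P H) (hH2 : IndepPairs P H)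
    (hH3 : IndepTriples P H) (hαH : IndepFun (fun ω u => α u ω) (fun ω k => H k ω) P) (i : ι) :
    Var[collisionCount α x H i; P] = #{u | x u = i} * β * (1 - β) + ∑ j ∈ univ.erase i,
      (((#{u | x u = j} : ℝ) ^ 2 * β ^ 2 + #{u | x u = j} * β * (1 - β)) * ((b : ℝ) - 1)
        / b ^ 2 + #{u | x u = j} * β * (1 - β) / b ^ 2) := by
  have hAI : ∀ j, MemLp (sampledCount α x j * collisionIndicator H i j) 2 P := fun j =>
    ((memLp_top_collisionIndicator hH i j).mul (memLp_top_sampledCount hα x j)).mono_exponent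
      le_top
  have hsum : collisionCount α x H i = ∑ j, sampledCount α x j * collisionIndicator H i j :=
    funext fun ω => by simp [collisionCount, Finset.sum_apply]
  rw [hsum, ← covariance_self (memLp_finsetSum' _ fun j _ => hAI j).aemeasurable,
    covariance_sum_sum_of_pairwise hAI
      (covariance_sampledCount_mul_collisionIndicator hα hαind hH hunif hH2 hH3 hαH i),
    inter_self, ← add_sum_erase _ _ (mem_univ i), sum_congr rfl fun j hj =>
      variance_sampledCount_mul_collisionIndicator hα hαind hH hunif hH2 hαH
        (ne_of_mem_erase hj)]
  simp [variance_sampledCount hα hαind, mul_assoc]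

end CollisionCount

end

theorem ch_estimator_expected_squared_error_general
    {Ω : Type*} [MeasurableSpace Ω] (P : Measure Ω) [IsProbabilityMeasure P]
    -- numbers of users, items, hash range
    (n d b : ℕ) (hn : 1 ≤ n) (hb : 2 ≤ b)
    -- sampling probability, dummy-count mean and variance
    (β : ℝ) (hβ0 : 0 < β) (μ σ2 : ℝ)
    -- users' items
    (x : Fin n → Fin d)
    -- random hash values, sampling indicators, dummy counts
    (H : Fin d → Ω → Fin b) (α : Fin n → Ω → ℝ) (z : Fin b → Ω → ℝ)
    (hHmeas : ∀ k, Measurable (H k))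
    (hαmeas : ∀ j, Measurable (α j))
    -- hash values have uniform marginals on {1,…,b}
    (hHunif : ∀ k v, P (H k ⁻¹' {v}) = 1 / b)
    -- hash values are 3-wise independent: every pair and every triple of distinct
    -- hash values is mutually independent
    (hH2 : ∀ k1 k2 : Fin d, k1 ≠ k2 → ∀ v1 v2 : Fin b,
      P (H k1 ⁻¹' {v1} ∩ H k2 ⁻¹' {v2}) = P (H k1 ⁻¹' {v1}) * P (H k2 ⁻¹' {v2}))
    (hH3 : ∀ k1 k2 k3 : Fin d, k1 ≠ k2 → k1 ≠ k3 → k2 ≠ k3 → ∀ v1 v2 v3 : Fin b,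
      P (H k1 ⁻¹' {v1} ∩ H k2 ⁻¹' {v2} ∩ H k3 ⁻¹' {v3})
        = P (H k1 ⁻¹' {v1}) * P (H k2 ⁻¹' {v2}) * P (H k3 ⁻¹' {v3}))
    -- i.i.d. Bernoulli(β) sampling indicators, independent of the hash values
    (hα01 : ∀ j ω, α j ω = 0 ∨ α j ω = 1)
    (hαmean : ∀ j, ∫ ω, α j ω ∂P = β)
    (hαiid : iIndepFun α P)
    (hαH : IndepFun (fun ω (j : Fin n) => α j ω) (fun ω (k : Fin d) => H k ω) P)
    -- i.i.d. nonnegative-integer-valued dummy counts with mean μ and variance σ²,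
    -- independent of the hash values and the sampling indicators
    (hzmean : ∀ k, ∫ ω, z k ω ∂P = μ)
    (hzL2 : ∀ k, MemLp (z k) 2 P)
    (hzvar : ∀ k, variance (z k) P = σ2)
    (hzrest : IndepFun (fun ω (k : Fin b) => z k ω)
      (fun ω => ((fun j : Fin n => α j ω), (fun k : Fin d => H k ω))) P)
    -- counts: c̃_k = Σ_j α_j · 1{H(x_j) = k} + z_k
    (c : Fin b → Ω → ℝ)
    (hc : ∀ k ω, c k ω = (∑ j, α j ω * (if H (x j) ω = k then 1 else 0)) + z k ω)
    -- estimator: f̂_i = b/(nβ(b−1)) · (c̃_{H(i)} − nβ/b − μ)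
    (fhat : Fin d → Ω → ℝ)
    (hfhat : ∀ i ω, fhat i ω =
      ((b : ℝ) / (n * β * ((b : ℝ) - 1))) * (c (H i ω) ω - n * β / b - μ))
    -- relative frequencies: f_i = (1/n)·#{j : x_j = i}
    (f : Fin d → ℝ)
    (hf : ∀ i, f i = ((Finset.univ.filter fun j => x j = i).card : ℝ) / n)
    (i : Fin d)
    -- the hash-collision term ω
    (w : ℝ)
    (hw : w = ∑ j ∈ Finset.univ.erase i,
      (((n : ℝ)^2 * (f j)^2 * β^2 + n * f j * β * (1 - β)) * ((b : ℝ) - 1) / (b : ℝ)^2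
        + n * f j * β * (1 - β) / (b : ℝ)^2)) :
    ∫ ω, (fhat i ω - f i)^2 ∂P
      = ((b : ℝ)^2 / ((n : ℝ)^2 * β^2 * ((b : ℝ) - 1)^2))
          * ((n : ℝ) * f i * β * (1 - β) + σ2 + w) := by
  have hb1 : (b : ℝ) - 1 ≠ 0 := by
    have : (2 : ℝ) ≤ b := by exact_mod_cast hb
    linarith
  have hn0 : (n : ℝ) ≠ 0 := by positivity
  have hm : ∀ j, (#{u | x u = j} : ℝ) = n * f j := fun j => by rw [hf]; field_simp
  have hα : IsBernoulliFamily α β P := ⟨hαmeas, hα01, hαmean⟩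
  set C : ℝ := b / (n * β * (b - 1)) with hC
  set S := collisionCount α x H i
  set Z : Ω → ℝ := fun ω => z (H i ω) ω
  have hS : MemLp S 2 P := (memLp_top_collisionCount hα hHmeas i).mono_exponent le_top
  have hZ : MemLp Z 2 P := memLp_apply_of_measurable (hHmeas i) hzL2
  have hzSH := hzrest.prodMk_collisionCount (x := x) i
  have hzH : IndepFun (fun ω k => z k ω) (H i) P := hzSH.comp measurable_id measurable_snd
  have hfhat_eq : ∀ ω, fhat i ω = C * ((S ω + Z ω) - (n * β / b + μ)) := fun ω => by
    rw [hfhat, hc, sum_mul_ite_eq_collisionCount]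
    ring
  have hunbiased : C * (P[fun ω => S ω + Z ω] - (n * β / b + μ)) = f i := by
    rw [integral_add (hS.integrable one_le_two) (hZ.integrable one_le_two),
      integral_collisionCount hα hHmeas hHunif hH2 hαH, integral_apply_of_indepFun hzH
        (hHmeas i) (fun k => (hzL2 k).integrable one_le_two) hzmean, hm, hC, Fintype.card_fin]
    field_simp
    ring
  calc ∫ ω, (fhat i ω - f i) ^ 2 ∂P = C ^ 2 * Var[fun ω => S ω + Z ω; P] := by
        simp_rw [hfhat_eq]
        exact integral_sq_const_mul_sub_sub (hS.add hZ) hunbiased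
    _ = C ^ 2 * (Var[S; P] + Var[Z; P]) := by
        rw [variance_fun_add hS hZ, covariance_apply_of_indepFun hzSH hS (hHmeas i) hzL2 hzmean]
        ring
    _ = _ := by
        rw [variance_collisionCount hα hαiid hHmeas hHunif hH2 hH3 hαH,
          variance_apply_of_indepFun hzH (hHmeas i) hzL2 hzmean hzvar]
        simp only [hm, mul_pow]
        rw [← hw, hC]
        field_simp
        ring

/-- Under the common-hash (CH) model with 3-wise independent hash values,
the CH estimator `f̂ i = b/(nβ(b−1)) · (c̃_{H(i)} − nβ/b − μ)` achieves, for every item `i`,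
the expected squared error
`E[(f̂ i − f i)²] = (b²/(n²β²(b−1)²)) · (n f_i β(1−β) + σ² + ω)`, where
`ω = Σ_{j ≠ i} ((n²f_j²β² + n f_j β(1−β))(b−1)/b² + n f_j β(1−β)/b²)`. -/
theorem ch_estimator_expected_squared_error
    {Ω : Type*} [MeasurableSpace Ω] (P : Measure Ω) [IsProbabilityMeasure P]
    -- numbers of users, items, hash range
    (n d b : ℕ) (hn : 1 ≤ n) (hd : 1 ≤ d) (hb : 2 ≤ b)
    -- sampling probability, dummy-count mean and variance
    (β : ℝ) (hβ0 : 0 < β) (hβ1 : β ≤ 1) (μ σ2 : ℝ)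
    -- users' items
    (x : Fin n → Fin d)
    -- random hash values, sampling indicators, dummy counts
    (H : Fin d → Ω → Fin b) (α : Fin n → Ω → ℝ) (z : Fin b → Ω → ℝ)
    (hHmeas : ∀ k, Measurable (H k))
    (hαmeas : ∀ j, Measurable (α j))
    (hzmeas : ∀ k, Measurable (z k))
    -- hash values have uniform marginals on {1,…,b}
    (hHunif : ∀ k v, P (H k ⁻¹' {v}) = 1 / b)
    -- hash values are 3-wise independent: every pair and every triple of distinct
    -- hash values is mutually independent
    (hH2 : ∀ k1 k2 : Fin d, k1 ≠ k2 → ∀ v1 v2 : Fin b,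
      P (H k1 ⁻¹' {v1} ∩ H k2 ⁻¹' {v2}) = P (H k1 ⁻¹' {v1}) * P (H k2 ⁻¹' {v2}))
    (hH3 : ∀ k1 k2 k3 : Fin d, k1 ≠ k2 → k1 ≠ k3 → k2 ≠ k3 → ∀ v1 v2 v3 : Fin b,
      P (H k1 ⁻¹' {v1} ∩ H k2 ⁻¹' {v2} ∩ H k3 ⁻¹' {v3})
        = P (H k1 ⁻¹' {v1}) * P (H k2 ⁻¹' {v2}) * P (H k3 ⁻¹' {v3}))
    -- i.i.d. Bernoulli(β) sampling indicators, independent of the hash values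
    (hα01 : ∀ j ω, α j ω = 0 ∨ α j ω = 1)
    (hαmean : ∀ j, ∫ ω, α j ω ∂P = β)
    (hαiid : iIndepFun α P)
    (hαident : ∀ j j', IdentDistrib (α j) (α j') P P)
    (hαH : IndepFun (fun ω (j : Fin n) => α j ω) (fun ω (k : Fin d) => H k ω) P)
    -- i.i.d. nonnegative-integer-valued dummy counts with mean μ and variance σ²,
    -- independent of the hash values and the sampling indicators
    (hzNat : ∀ k ω, ∃ m : ℕ, z k ω = m)
    (hzint : ∀ k, Integrable (z k) P)
    (hzmean : ∀ k, ∫ ω, z k ω ∂P = μ)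
    (hzL2 : ∀ k, MemLp (z k) 2 P)
    (hzvar : ∀ k, variance (z k) P = σ2)
    (hziid : iIndepFun z P)
    (hzident : ∀ k k', IdentDistrib (z k) (z k') P P)
    (hzrest : IndepFun (fun ω (k : Fin b) => z k ω)
      (fun ω => ((fun j : Fin n => α j ω), (fun k : Fin d => H k ω))) P)
    -- counts: c̃_k = Σ_j α_j · 1{H(x_j) = k} + z_k
    (c : Fin b → Ω → ℝ)
    (hc : ∀ k ω, c k ω = (∑ j, α j ω * (if H (x j) ω = k then 1 else 0)) + z k ω)
    -- estimator: f̂_i = b/(nβ(b−1)) · (c̃_{H(i)} − nβ/b − μ)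
    (fhat : Fin d → Ω → ℝ)
    (hfhat : ∀ i ω, fhat i ω =
      ((b : ℝ) / (n * β * ((b : ℝ) - 1))) * (c (H i ω) ω - n * β / b - μ))
    -- relative frequencies: f_i = (1/n)·#{j : x_j = i}
    (f : Fin d → ℝ)
    (hf : ∀ i, f i = ((Finset.univ.filter fun j => x j = i).card : ℝ) / n)
    (i : Fin d)
    -- the hash-collision term ω
    (w : ℝ)
    (hw : w = ∑ j ∈ Finset.univ.erase i,
      (((n : ℝ)^2 * (f j)^2 * β^2 + n * f j * β * (1 - β)) * ((b : ℝ) - 1) / (b : ℝ)^2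
        + n * f j * β * (1 - β) / (b : ℝ)^2)) :
    ∫ ω, (fhat i ω - f i)^2 ∂P
      = ((b : ℝ)^2 / ((n : ℝ)^2 * β^2 * ((b : ℝ) - 1)^2))
          * ((n : ℝ) * f i * β * (1 - β) + σ2 + w) :=
  ch_estimator_expected_squared_error_general P n d b hn hb β hβ0 μ σ2 x H α z hHmeas hαmeas hHunif
    hH2 hH3 hα01 hαmean hαiid hαH hzmean hzL2 hzvar hzrest c hc fhat hfhat f hf i w hw
end

section
/- In the FME protocol, conditioned on item i being selected in the filtering step, the estimate is unbiased and has the stated variance: E[f̂_i] = f_i and Var[f̂_i] = f_i(1−β)/(nβ) + σ₂²/(n²β²), where f̂_i = (c̃_i − μ₂)/(nβ). -/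
/-!
The count `c̃ = ∑ⱼ αⱼ + z` is a sum of independent summands: `m` Bernoulli(β) indicators, each
of mean `β` and variance `β(1 - β)`, and the dummy count `z`. Means add by linearity and, by
independence, so do variances; the affine map `c ↦ (c - μ₂)/(nβ)` then shifts the mean to `m/n`
and scales the variance by `1/(nβ)²`.
-/

open MeasureTheory ProbabilityTheory

namespace ProbabilityTheory

variable {Ω : Type*} [MeasurableSpace Ω] {P : Measure Ω}

section Indicator

variable {X : Ω → ℝ}

lemma memLp_of_forall_eq_zero_or_one [IsFiniteMeasure P] (hX : AEStronglyMeasurable X P)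
    (h01 : ∀ ω, X ω = 0 ∨ X ω = 1) (p : ENNReal) : MemLp X p P :=
  MemLp.of_bound hX 1 <| .of_forall fun ω ↦ by rcases h01 ω with h | h <;> simp [h]

lemma variance_of_forall_eq_zero_or_one [IsProbabilityMeasure P] (hX : AEStronglyMeasurable X P)
    (h01 : ∀ ω, X ω = 0 ∨ X ω = 1) : variance X P = P[X] * (1 - P[X]) := by
  have hsq : X ^ 2 = X := funext fun ω ↦ by rcases h01 ω with h | h <;> simp [h]
  rw [variance_eq_sub (memLp_of_forall_eq_zero_or_one hX h01 2), hsq]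
  ring

end Indicator

variable [IsProbabilityMeasure P] {ι : Type*} [Fintype ι] {X : ι → Ω → ℝ} {p : ℝ}

lemma variance_sum_of_iIndepFun_of_eq_zero_or_one (hX : ∀ i, AEStronglyMeasurable (X i) P)
    (h01 : ∀ i ω, X i ω = 0 ∨ X i ω = 1) (hmean : ∀ i, P[X i] = p) (hind : iIndepFun X P) :
    variance (∑ i, X i) P = Fintype.card ι * (p * (1 - p)) := by
  rw [IndepFun.variance_sum (fun i _ ↦ memLp_of_forall_eq_zero_or_one (hX i) (h01 i) 2)
    fun i _ j _ hij ↦ hind.indepFun hij]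
  simp [variance_of_forall_eq_zero_or_one (hX _) (h01 _), hmean]

end ProbabilityTheory

theorem fme_estimator_unbiased_and_variance_general
    {Ω : Type*} [MeasurableSpace Ω] (P : Measure Ω) [IsProbabilityMeasure P]
    -- n users in total, m = n·f_i of whom hold item i
    (n m : ℕ)
    (β : ℝ) (hβ0 : 0 < β)
    (μ2 σ2 : ℝ)
    -- i.i.d. Bernoulli(β) sampling indicators
    (α : Fin m → Ω → ℝ)
    (hαmeas : ∀ j, Measurable (α j))
    (hα01 : ∀ j ω, α j ω = 0 ∨ α j ω = 1)
    (hαmean : ∀ j, ∫ ω, α j ω ∂P = β)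
    (hαiid : iIndepFun α P)
    -- nonnegative-integer-valued dummy count with mean μ₂ and variance σ₂²,
    -- independent of the sampling indicators
    (z : Ω → ℝ)
    (hzL2 : MemLp z 2 P)
    (hzmean : ∫ ω, z ω ∂P = μ2)
    (hzvar : variance z P = σ2)
    (hzα : IndepFun z (fun ω (j : Fin m) => α j ω) P)
    -- estimator: f̂_i = (c̃_i − μ₂)/(nβ) with c̃_i = Σ_j α_j + z
    (fhat : Ω → ℝ)
    (hfhat : ∀ ω, fhat ω = ((∑ j, α j ω) + z ω - μ2) / (n * β)) :
    (∫ ω, fhat ω ∂P = (m : ℝ) / n) ∧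
      variance fhat P
        = ((m : ℝ) / n) * (1 - β) / (n * β) + σ2 / ((n : ℝ)^2 * β^2) := by
  set S := ∑ j, α j
  have hαL2 (j : Fin m) : MemLp (α j) 2 P :=
    memLp_of_forall_eq_zero_or_one (hαmeas j).aestronglyMeasurable (hα01 j) 2
  have hSL2 : MemLp S 2 P := memLp_finsetSum' _ fun j _ ↦ hαL2 j
  have hSmean : P[S] = m * β := by
    simp [S, integral_finsetSum _ fun j _ ↦ (hαL2 j).integrable one_le_two, hαmean]
  have hSvar : variance S P = m * (β * (1 - β)) := by
    simpa using variance_sum_of_iIndepFun_of_eq_zero_or_one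
      (fun j ↦ (hαmeas j).aestronglyMeasurable) hα01 hαmean hαiid
  have hSz : IndepFun S z P := by
    have hsum : S = (fun v : Fin m → ℝ ↦ ∑ j, v j) ∘ fun ω j ↦ α j ω := by ext ω; simp [S]
    exact hsum ▸ (hzα.comp measurable_id (by fun_prop)).symm
  have hfhat' : fhat = fun ω ↦ (n * β)⁻¹ * ((S + z) ω - μ2) := funext fun ω ↦ by
    simp [S, hfhat, div_eq_inv_mul]
  have hβ : β ≠ 0 := hβ0.ne'
  constructor
  · rw [hfhat', integral_const_mul, integral_sub (hSL2.add hzL2 |>.integrable one_le_two)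
      (integrable_const _), integral_add' (hSL2.integrable one_le_two)
      (hzL2.integrable one_le_two), hSmean, hzmean]
    field_simp
    simp
  · rw [hfhat', variance_const_mul, variance_sub_const (hSL2.add hzL2).1,
      hSz.variance_add hSL2 hzL2, hSvar, hzvar]
    field_simp

/-- In the FME protocol, conditioned on item `i` being selected in the
filtering step, the estimate is unbiased and has the stated variance:
`E[f̂ i] = f i` and `Var[f̂ i] = f_i(1−β)/(nβ) + σ₂²/(n²β²)`,
where `f̂ i = (c̃ i − μ₂)/(nβ)`, `c̃ i = Σ_{j=1}^m α_j + z` and `f_i = m/n`. -/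
theorem fme_estimator_unbiased_and_variance
    {Ω : Type*} [MeasurableSpace Ω] (P : Measure Ω) [IsProbabilityMeasure P]
    -- n users in total, m = n·f_i of whom hold item i
    (n m : ℕ) (hn : 1 ≤ n) (hmn : m ≤ n)
    (β : ℝ) (hβ0 : 0 < β) (hβ1 : β ≤ 1)
    (μ2 σ2 : ℝ)
    -- i.i.d. Bernoulli(β) sampling indicators
    (α : Fin m → Ω → ℝ)
    (hαmeas : ∀ j, Measurable (α j))
    (hα01 : ∀ j ω, α j ω = 0 ∨ α j ω = 1)
    (hαmean : ∀ j, ∫ ω, α j ω ∂P = β)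
    (hαiid : iIndepFun α P)
    (hαident : ∀ j j', IdentDistrib (α j) (α j') P P)
    -- nonnegative-integer-valued dummy count with mean μ₂ and variance σ₂²,
    -- independent of the sampling indicators
    (z : Ω → ℝ)
    (hzmeas : Measurable z)
    (hzNat : ∀ ω, ∃ k : ℕ, z ω = k)
    (hzL2 : MemLp z 2 P)
    (hzmean : ∫ ω, z ω ∂P = μ2)
    (hzvar : variance z P = σ2)
    (hzα : IndepFun z (fun ω (j : Fin m) => α j ω) P)
    -- estimator: f̂_i = (c̃_i − μ₂)/(nβ) with c̃_i = Σ_j α_j + z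
    (fhat : Ω → ℝ)
    (hfhat : ∀ ω, fhat ω = ((∑ j, α j ω) + z ω - μ2) / (n * β)) :
    (∫ ω, fhat ω ∂P = (m : ℝ) / n) ∧
      variance fhat P
        = ((m : ℝ) / n) * (1 - β) / (n * β) + σ2 / ((n : ℝ)^2 * β^2) :=
  fme_estimator_unbiased_and_variance_general P n m β hβ0 μ2 σ2 α hαmeas hα01 hαmean hαiid z hzL2
    hzmean hzvar hzα fhat hfhat
end

section
/- Hypothesis-testing characterization of (ε,δ)-DP (Theorem 15): a mechanism M provides (ε,δ)-DP if and only if for every pair of neighboring databases D, D' and every measurable rejection region A, the type I and type II error probabilities p_I = P[M(D) ∈ A] and p_II = P[M(D') ∈ Aᶜ] satisfy both p_I + e^ε·p_II ≥ 1 − δ and e^ε·p_I + p_II ≥ 1 − δ. -/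
/-! Both error bounds are the `(ε,δ)`-DP inequality rewritten with `P[Aᶜ] = 1 - P[A]`:
`p_I + e^ε·p_II ≥ 1 − δ` is the DP inequality for `(D, D')` on `Aᶜ`, and
`e^ε·p_I + p_II ≥ 1 − δ` is the DP inequality for `(D', D)` on `A`; the symmetry of the
neighboring relation supplies the swapped pair. -/

def Neighboring {α : Type*} {n : ℕ} (D D' : Fin n → α) : Prop :=
  ∃ i, ∀ j, j ≠ i → D j = D' j

theorem Neighboring.symm {α : Type*} {n : ℕ} {D D' : Fin n → α}
    (h : Neighboring D D') : Neighboring D' D :=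
  let ⟨i, hi⟩ := h
  ⟨i, fun j hj => (hi j hj).symm⟩

namespace MeasureTheory

variable {Ω : Type*} [MeasurableSpace Ω] {μ ν : Measure Ω} {A : Set Ω}

theorem toReal_compl_le_mul_add_iff [IsProbabilityMeasure μ] (c δ : ℝ) (hA : MeasurableSet A) :
    (μ Aᶜ).toReal ≤ c * (ν Aᶜ).toReal + δ ↔ 1 - δ ≤ (μ A).toReal + c * (ν Aᶜ).toReal := by
  rw [← measureReal_def, probReal_compl_eq_one_sub hA, measureReal_def]
  constructor <;> intro h <;> linarith

theorem toReal_le_mul_add_iff [IsProbabilityMeasure ν] (c δ : ℝ) (hA : MeasurableSet A) :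
    (ν A).toReal ≤ c * (μ A).toReal + δ ↔ 1 - δ ≤ c * (μ A).toReal + (ν Aᶜ).toReal := by
  rw [← measureReal_def ν Aᶜ, probReal_compl_eq_one_sub hA, measureReal_def]
  constructor <;> intro h <;> linarith

end MeasureTheory

theorem dp_iff_hypothesis_testing_general
    {X O : Type*} [MeasurableSpace O]
    (n : ℕ) (ε δ : ℝ)
    (M : (Fin n → X) → MeasureTheory.Measure O)
    (hprob : ∀ D, MeasureTheory.IsProbabilityMeasure (M D)) :
    (∀ D D' : Fin n → X, Neighboring D D' → ∀ S : Set O, MeasurableSet S →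
        (M D S).toReal ≤ Real.exp ε * (M D' S).toReal + δ)
    ↔ (∀ D D' : Fin n → X, Neighboring D D' → ∀ A : Set O, MeasurableSet A →
        1 - δ ≤ (M D A).toReal + Real.exp ε * (M D' Aᶜ).toReal
        ∧ 1 - δ ≤ Real.exp ε * (M D A).toReal + (M D' Aᶜ).toReal) := by
  constructor
  · intro hDP D D' hN A hA
    have := hprob D'
    have := hprob D
    exact ⟨(MeasureTheory.toReal_compl_le_mul_add_iff _ _ hA).1 (hDP D D' hN Aᶜ hA.compl),
      (MeasureTheory.toReal_le_mul_add_iff _ _ hA).1 (hDP D' D hN.symm A hA)⟩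
  · intro hHT D D' hN S hS
    have := hprob D
    have hTest := (hHT D D' hN Sᶜ hS.compl).1
    rwa [← MeasureTheory.toReal_compl_le_mul_add_iff _ _ hS.compl, compl_compl] at hTest

/-- Hypothesis-testing characterization of `(ε,δ)`-DP (Theorem 15):
a mechanism `M` provides `(ε,δ)`-DP if and only if for every pair of neighboring databases
`D, D'` and every measurable rejection region `A`, the type I and type II error
probabilities `p_I = P[M(D) ∈ A]` and `p_II = P[M(D') ∈ Aᶜ]` satisfy both
`p_I + e^ε·p_II ≥ 1 − δ` and `e^ε·p_I + p_II ≥ 1 − δ`. -/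
theorem dp_iff_hypothesis_testing
    {X O : Type*} [MeasurableSpace O]
    (n : ℕ) (ε δ : ℝ) (hε : 0 ≤ ε) (hδ0 : 0 ≤ δ) (hδ1 : δ ≤ 1)
    (M : (Fin n → X) → MeasureTheory.Measure O)
    (hprob : ∀ D, MeasureTheory.IsProbabilityMeasure (M D)) :
    (∀ D D' : Fin n → X, Neighboring D D' → ∀ S : Set O, MeasurableSet S →
        (M D S).toReal ≤ Real.exp ε * (M D' S).toReal + δ)
    ↔ (∀ D D' : Fin n → X, Neighboring D D' → ∀ A : Set O, MeasurableSet A →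
        1 - δ ≤ (M D A).toReal + Real.exp ε * (M D' Aᶜ).toReal
        ∧ 1 - δ ≤ Real.exp ε * (M D A).toReal + (M D' Aᶜ).toReal) :=
  dp_iff_hypothesis_testing_general n ε δ M hprob
end

section
/- The group-dependent hash (GH) estimator is unbiased: for every item i ∈ {1,…,d}, E[f̂_i] = f_i, where f̂_i = b/(nβ(b−1)) · ( Σ_{r=1}^g c̃_{r,H_r(i)} − nβ/b − gμ ). -/
/-!
Regroup `Σ_r c̃_{r,H_r(i)}` by users: user `j` contributes `α_j` exactly when its item collides
with `i` under the hash of its group, `H_{r(j)}(x_j) = H_{r(j)}(i)`, and each group contributes the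
dummy count `z_{r,H_r(i)}`. The collision is certain when `x_j = i`; otherwise it has probability
`1/b` by pairwise independence and uniformity, and it is independent of `α_j`. So the user part has
mean `β·m + β(n - m)/b` with `m = #{j : x_j = i}`, while a dummy count read at an independent random
index still has mean `μ`. Solving for `m / n` is exactly the debiasing in `f̂_i`.
-/

open MeasureTheory ProbabilityTheory

theorem eval_eq_sum_indicator {Ω κ : Type*} [Fintype κ] (Z : κ → Ω → ℝ) (K : Ω → κ) (ω : Ω) :
    Z (K ω) ω = ∑ k, (K ⁻¹' {k}).indicator (Z k) ω := by
  classical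
  simp [Set.indicator_apply, eq_comm]

namespace ProbabilityTheory

variable {Ω κ γ : Type*} [MeasurableSpace Ω] {P : Measure Ω}
  [MeasurableSpace κ] [MeasurableSingletonClass κ]

theorem IndepFun.measure_collision_eq_of_uniform [Fintype κ] [IsProbabilityMeasure P]
    {X Y : Ω → κ} {p : ENNReal} (hX : Measurable X) (hY : Measurable Y)
    (hXY : IndepFun X Y P) (hunif : ∀ v, P (X ⁻¹' {v}) = p) :
    P {ω | X ω = Y ω} = p := by
  have hfib : {ω | X ω = Y ω} = ⋃ v, X ⁻¹' {v} ∩ Y ⁻¹' {v} := by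
    ext ω
    simp [eq_comm]
  have hdisj : Pairwise (Function.onFun Disjoint fun v => X ⁻¹' {v} ∩ Y ⁻¹' {v}) :=
    fun v w hvw => ((Set.disjoint_singleton.2 hvw).preimage X).mono
      Set.inter_subset_left Set.inter_subset_left
  rw [hfib, measure_iUnion hdisj fun v => (hX (measurableSet_singleton v)).inter
      (hY (measurableSet_singleton v)), tsum_fintype]
  calc ∑ v, P (X ⁻¹' {v} ∩ Y ⁻¹' {v})
      = ∑ v, p * P (Y ⁻¹' {v}) := by
        refine Finset.sum_congr rfl fun v _ => ?_
        rw [hXY.measure_inter_preimage_eq_mul _ _ (measurableSet_singleton v)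
          (measurableSet_singleton v), hunif]
    _ = p := by
        rw [← Finset.mul_sum, sum_measure_preimage_singleton _
          fun v _ => hY (measurableSet_singleton v)]
        simp

theorem IndepFun.setIntegral_preimage_eq_mul [MeasurableSpace γ] {X : Ω → ℝ} {Y : Ω → γ}
    {s : Set γ} (hXY : IndepFun X Y P) (hX : AEMeasurable X P) (hY : Measurable Y)
    (hs : MeasurableSet s) :
    ∫ ω in Y ⁻¹' s, X ω ∂P = P.real (Y ⁻¹' s) * ∫ ω, X ω ∂P :=
  Indep.setIntegral_eq_mul (f := id) hY.comap_le hXY.symm hX ⟨s, hs, rfl⟩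
    measurable_id.aestronglyMeasurable

theorem integrable_eval [Fintype κ] {Z : κ → Ω → ℝ} {K : Ω → κ} (hK : Measurable K)
    (hZ : ∀ k, Integrable (Z k) P) : Integrable (fun ω => Z (K ω) ω) P := by
  simp_rw [eval_eq_sum_indicator Z K]
  exact integrable_finsetSum _ fun k _ => (hZ k).indicator (hK (measurableSet_singleton k))

theorem integral_eval_of_indepFun [Fintype κ] [IsProbabilityMeasure P] {Z : κ → Ω → ℝ}
    {K : Ω → κ} {m : ℝ} (hK : Measurable K) (hZ : ∀ k, Integrable (Z k) P)
    (hZK : IndepFun (fun ω k => Z k ω) K P) (hm : ∀ k, ∫ ω, Z k ω ∂P = m) :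
    ∫ ω, Z (K ω) ω ∂P = m := by
  simp_rw [eval_eq_sum_indicator Z K]
  rw [integral_finsetSum _ fun k _ => (hZ k).indicator (hK (measurableSet_singleton k))]
  calc ∑ k, ∫ ω, (K ⁻¹' {k}).indicator (Z k) ω ∂P
      = ∑ k, P.real (K ⁻¹' {k}) * m := by
        refine Finset.sum_congr rfl fun k _ => ?_
        have hZkK : IndepFun (Z k) K P := hZK.comp (measurable_pi_apply k) measurable_id
        rw [integral_indicator (hK (measurableSet_singleton k)), hZkK.setIntegral_preimage_eq_mul
            (hZ k).aemeasurable hK (measurableSet_singleton k), hm]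
    _ = m := by
        rw [← Finset.sum_mul, sum_measureReal_preimage_singleton _
          fun k _ => hK (measurableSet_singleton k)]
        simp

end ProbabilityTheory

theorem sum_ite_eq_add_card_mul {ι : Type*} [Fintype ι] (p : ι → Prop) [DecidablePred p]
    {β b : ℝ} (hb : b ≠ 0) :
    ∑ j, (if p j then β else β / b)
      = Fintype.card ι * β / b + (Finset.univ.filter p).card * (β * (b - 1) / b) := by
  rw [Finset.sum_ite, Finset.sum_const, Finset.sum_const, nsmul_eq_mul, nsmul_eq_mul,
    ← Finset.card_univ, ← Finset.card_filter_add_card_filter_not (s := Finset.univ) p]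
  push_cast
  field_simp
  ring

section GroupHash

variable {Ω : Type*} {n d b g : ℕ}
  {x : Fin n → Fin d} {grp : Fin n → Fin g} {H : Fin g → Fin d → Ω → Fin b}
  {α : Fin n → Ω → ℝ} {z : Fin g → Fin b → Ω → ℝ}

theorem sum_counts_at_hash {c : Fin g → Fin b → Ω → ℝ}
    (hc : ∀ r k ω, c r k ω
      = (∑ j ∈ Finset.univ.filter (fun j => grp j = r),
          α j ω * (if H r (x j) ω = k then 1 else 0)) + z r k ω)
    (i : Fin d) (ω : Ω) :
    ∑ r, c r (H r i ω) ω
      = ∑ j, {ω | H (grp j) (x j) ω = H (grp j) i ω}.indicator (α j) ω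
        + ∑ r, z r (H r i ω) ω := by
  rw [← Finset.sum_fiberwise _ grp, ← Finset.sum_add_distrib]
  refine Finset.sum_congr rfl fun r _ => ?_
  rw [hc]
  congr 1
  refine Finset.sum_congr rfl fun j hj => ?_
  rw [(Finset.mem_filter.1 hj).2]
  simp [Set.indicator_apply]

variable [MeasurableSpace Ω] {P : Measure Ω}

theorem integral_sampled_collision [IsProbabilityMeasure P] {β : ℝ}
    (hHmeas : ∀ r k, Measurable (H r k))
    (hHunif : ∀ r k v, P (H r k ⁻¹' {v}) = 1 / b)
    (hHpair : ∀ r k k', k ≠ k' → IndepFun (H r k) (H r k') P)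
    (hα : ∀ j, AEMeasurable (α j) P) (hαmean : ∀ j, ∫ ω, α j ω ∂P = β)
    (hαH : IndepFun (fun ω (j : Fin n) => α j ω)
      (fun ω (rk : Fin g × Fin d) => H rk.1 rk.2 ω) P)
    (i : Fin d) (j : Fin n) :
    ∫ ω in {ω | H (grp j) (x j) ω = H (grp j) i ω}, α j ω ∂P
      = if x j = i then β else β / b := by
  split_ifs with hxi
  · simp [hxi, hαmean]
  have hcollide : {ω | H (grp j) (x j) ω = H (grp j) i ω}
      = (fun ω (rk : Fin g × Fin d) => H rk.1 rk.2 ω)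
          ⁻¹' {v | v (grp j, x j) = v (grp j, i)} := rfl
  have hαj : IndepFun (α j) (fun ω (rk : Fin g × Fin d) => H rk.1 rk.2 ω) P :=
    hαH.comp (measurable_pi_apply j) measurable_id
  have hprob : P {ω | H (grp j) (x j) ω = H (grp j) i ω} = 1 / b :=
    (hHpair (grp j) (x j) i hxi).measure_collision_eq_of_uniform (hHmeas _ _) (hHmeas _ _)
      (hHunif _ _)
  rw [hcollide, hαj.setIntegral_preimage_eq_mul (hα j)
      (measurable_pi_lambda _ fun rk => hHmeas rk.1 rk.2)
      (measurableSet_eq_fun (measurable_pi_apply _) (measurable_pi_apply _)),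
    ← hcollide, measureReal_def, hprob, hαmean]
  simp [div_eq_inv_mul]

end GroupHash

theorem gh_estimator_unbiased_general
    {Ω : Type*} [MeasurableSpace Ω] (P : Measure Ω) [IsProbabilityMeasure P]
    -- numbers of users, items, hash range, groups
    (n d b g : ℕ) (hb : 2 ≤ b)
    -- sampling probability and dummy-count mean
    (β : ℝ) (hβ0 : 0 < β) (μ : ℝ)
    -- users' items and the fixed group assignment
    (x : Fin n → Fin d) (grp : Fin n → Fin g)
    -- per-group random hash values, sampling indicators, per-group dummy counts
    (H : Fin g → Fin d → Ω → Fin b) (α : Fin n → Ω → ℝ) (z : Fin g → Fin b → Ω → ℝ)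
    (hHmeas : ∀ r k, Measurable (H r k))
    -- within each group, hash values are pairwise independent with uniform marginals
    (hHunif : ∀ r k v, P (H r k ⁻¹' {v}) = 1 / b)
    (hHpair : ∀ r k k', k ≠ k' → IndepFun (H r k) (H r k') P)
    -- i.i.d. Bernoulli(β) sampling indicators, independent of all hashes
    (hαmean : ∀ j, ∫ ω, α j ω ∂P = β)
    (hαH : IndepFun (fun ω (j : Fin n) => α j ω)
      (fun ω (rk : Fin g × Fin d) => H rk.1 rk.2 ω) P)
    -- i.i.d. nonnegative-integer-valued dummy counts with mean μ,
    -- independent of everything else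
    (hzint : ∀ r k, Integrable (z r k) P)
    (hzmean : ∀ r k, ∫ ω, z r k ω ∂P = μ)
    (hzrest : IndepFun (fun ω (rk : Fin g × Fin b) => z rk.1 rk.2 ω)
      (fun ω => ((fun j : Fin n => α j ω),
                 (fun rk : Fin g × Fin d => H rk.1 rk.2 ω))) P)
    -- counts: c̃_{r,k} = Σ_{j : r(j) = r} α_j · 1{H_r(x_j) = k} + z_{r,k}
    (c : Fin g → Fin b → Ω → ℝ)
    (hc : ∀ r k ω, c r k ω
      = (∑ j ∈ Finset.univ.filter (fun j => grp j = r),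
          α j ω * (if H r (x j) ω = k then 1 else 0)) + z r k ω)
    -- estimator: f̂_i = b/(nβ(b−1)) · (Σ_r c̃_{r,H_r(i)} − nβ/b − gμ)
    (fhat : Fin d → Ω → ℝ)
    (hfhat : ∀ i ω, fhat i ω = ((b : ℝ) / (n * β * ((b : ℝ) - 1)))
      * ((∑ r, c r (H r i ω) ω) - n * β / b - g * μ))
    -- relative frequencies: f_i = (1/n)·#{j : x_j = i}
    (f : Fin d → ℝ)
    (hf : ∀ i, f i = ((Finset.univ.filter fun j => x j = i).card : ℝ) / n)
    (i : Fin d) :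
    ∫ ω, fhat i ω ∂P = f i := by
  classical
  -- A non-integrable function has Bochner integral `0`, so `∫ α j = β ≠ 0` forces integrability.
  have hα : ∀ j, Integrable (α j) P := fun j =>
    Integrable.of_integral_ne_zero (by rw [hαmean]; exact hβ0.ne')
  have hcollide : ∀ j, MeasurableSet {ω | H (grp j) (x j) ω = H (grp j) i ω} := fun j =>
    measurableSet_eq_fun (hHmeas _ _) (hHmeas _ _)
  have hsampled_int : Integrable (fun ω =>
      ∑ j, {ω | H (grp j) (x j) ω = H (grp j) i ω}.indicator (α j) ω) P :=
    integrable_finsetSum _ fun j _ => (hα j).indicator (hcollide j)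
  have hdummy_int : Integrable (fun ω => ∑ r, z r (H r i ω) ω) P :=
    integrable_finsetSum _ fun r _ => integrable_eval (hHmeas r i) (hzint r)
  have hdummy_mean : ∀ r, ∫ ω, z r (H r i ω) ω ∂P = μ := fun r =>
    integral_eval_of_indepFun (hHmeas r i) (hzint r)
      (hzrest.comp (φ := fun (v : Fin g × Fin b → ℝ) k => v (r, k))
        (ψ := fun p : (Fin n → ℝ) × (Fin g × Fin d → Fin b) => p.2 (r, i))
        (by fun_prop) (by fun_prop)) (hzmean r)
  have hb1 : (b : ℝ) - 1 ≠ 0 := sub_ne_zero.2 (by exact_mod_cast (by omega : b ≠ 1))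
  calc ∫ ω, fhat i ω ∂P
      = b / (n * β * (b - 1)) * (∑ j, (if x j = i then β else β / b) + g * μ - n * β / b
          - g * μ) := by
        simp_rw [hfhat, sum_counts_at_hash hc]
        rw [integral_const_mul, integral_sub (by fun_prop) (by fun_prop),
          integral_sub (by fun_prop) (by fun_prop), integral_add hsampled_int hdummy_int,
          integral_finsetSum _ fun j _ => (hα j).indicator (hcollide j),
          integral_finsetSum _ fun r _ => integrable_eval (hHmeas r i) (hzint r)]
        simp_rw [integral_indicator (hcollide _), integral_sampled_collision hHmeas hHunif hHpair
          (fun j => (hα j).aemeasurable) hαmean hαH, hdummy_mean]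
        simp
    _ = f i := by
        rw [sum_ite_eq_add_card_mul _ (by positivity), hf, Fintype.card_fin]
        field_simp
        ring

/-- The group-dependent hash (GH) estimator is unbiased: for every item
`i`, `E[f̂ i] = f i`, where
`f̂ i = b/(nβ(b−1)) · (Σ_{r=1}^g c̃_{r,H_r(i)} − nβ/b − gμ)`. -/
theorem gh_estimator_unbiased
    {Ω : Type*} [MeasurableSpace Ω] (P : Measure Ω) [IsProbabilityMeasure P]
    -- numbers of users, items, hash range, groups
    (n d b g : ℕ) (hn : 1 ≤ n) (hd : 1 ≤ d) (hb : 2 ≤ b) (hg : 1 ≤ g)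
    -- sampling probability and dummy-count mean
    (β : ℝ) (hβ0 : 0 < β) (hβ1 : β ≤ 1) (μ : ℝ)
    -- users' items and the fixed group assignment
    (x : Fin n → Fin d) (grp : Fin n → Fin g)
    -- per-group random hash values, sampling indicators, per-group dummy counts
    (H : Fin g → Fin d → Ω → Fin b) (α : Fin n → Ω → ℝ) (z : Fin g → Fin b → Ω → ℝ)
    (hHmeas : ∀ r k, Measurable (H r k))
    (hαmeas : ∀ j, Measurable (α j))
    (hzmeas : ∀ r k, Measurable (z r k))
    -- within each group, hash values are pairwise independent with uniform marginals
    (hHunif : ∀ r k v, P (H r k ⁻¹' {v}) = 1 / b)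
    (hHpair : ∀ r k k', k ≠ k' → IndepFun (H r k) (H r k') P)
    -- the hash families are independent across groups
    (hHgroups : iIndepFun
      (fun r : Fin g => fun ω => fun k : Fin d => H r k ω) P)
    -- i.i.d. Bernoulli(β) sampling indicators, independent of all hashes
    (hα01 : ∀ j ω, α j ω = 0 ∨ α j ω = 1)
    (hαmean : ∀ j, ∫ ω, α j ω ∂P = β)
    (hαiid : iIndepFun α P)
    (hαident : ∀ j j', IdentDistrib (α j) (α j') P P)
    (hαH : IndepFun (fun ω (j : Fin n) => α j ω)
      (fun ω (rk : Fin g × Fin d) => H rk.1 rk.2 ω) P)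
    -- i.i.d. nonnegative-integer-valued dummy counts with mean μ,
    -- independent of everything else
    (hzNat : ∀ r k ω, ∃ mval : ℕ, z r k ω = mval)
    (hzint : ∀ r k, Integrable (z r k) P)
    (hzmean : ∀ r k, ∫ ω, z r k ω ∂P = μ)
    (hziid : iIndepFun
      (fun rk : Fin g × Fin b => z rk.1 rk.2) P)
    (hzident : ∀ r k r' k', IdentDistrib (z r k) (z r' k') P P)
    (hzrest : IndepFun (fun ω (rk : Fin g × Fin b) => z rk.1 rk.2 ω)
      (fun ω => ((fun j : Fin n => α j ω),
                 (fun rk : Fin g × Fin d => H rk.1 rk.2 ω))) P)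
    -- counts: c̃_{r,k} = Σ_{j : r(j) = r} α_j · 1{H_r(x_j) = k} + z_{r,k}
    (c : Fin g → Fin b → Ω → ℝ)
    (hc : ∀ r k ω, c r k ω
      = (∑ j ∈ Finset.univ.filter (fun j => grp j = r),
          α j ω * (if H r (x j) ω = k then 1 else 0)) + z r k ω)
    -- estimator: f̂_i = b/(nβ(b−1)) · (Σ_r c̃_{r,H_r(i)} − nβ/b − gμ)
    (fhat : Fin d → Ω → ℝ)
    (hfhat : ∀ i ω, fhat i ω = ((b : ℝ) / (n * β * ((b : ℝ) - 1)))
      * ((∑ r, c r (H r i ω) ω) - n * β / b - g * μ))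
    -- relative frequencies: f_i = (1/n)·#{j : x_j = i}
    (f : Fin d → ℝ)
    (hf : ∀ i, f i = ((Finset.univ.filter fun j => x j = i).card : ℝ) / n)
    (i : Fin d) :
    ∫ ω, fhat i ω ∂P = f i :=
  gh_estimator_unbiased_general P n d b g hb β hβ0 μ x grp H α z hHmeas hHunif hHpair hαmean hαH
    hzint hzmean hzrest c hc fhat hfhat f hf i
end
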